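/- Let (V, Ω) be a symplectic vector space, C : V → V a linear anti-symplectic involution (C ∘ C = id and Ω(C u, C v) = −Ω(u, v) for all u, v), and Φ : V → V a linear symplectic automorphism (bijective with Ω(Φ u, Φ v) = Ω(u, v) for all u, v) satisfying (C ∘ Φ) ∘ (C ∘ Φ) = id. Then the bilinear form B(u, v) := Ω((id − Φ)u, C v) on V is symmetric: B(u, v) = B(v, u) for all u, v ∈ V. In particular, Q(v) := Ω((id − Φ)v, C v) defines a quadratic form on V. -/
import Mathlib


/-- If `C` is a linear anti-symplectic involution and `Φ` a linear
symplectic automorphism of a symplectic vector space `(V, Ω)` with `(C ∘ Φ)² = id`,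
then `B(u, v) = Ω((id − Φ)u, C v)` is a symmetric bilinear form; in particular
`Q(v) = Ω((id − Φ)v, C v)` defines a quadratic form on `V`. -/
theorem index_difference_form_symmetric
    (V : Type*) [AddCommGroup V] [Module ℝ V] [FiniteDimensional ℝ V]
    (Ω : V →ₗ[ℝ] V →ₗ[ℝ] ℝ)
    (halt : ∀ v, Ω v v = 0)
    (hnondeg : ∀ u, (∀ v, Ω u v = 0) → u = 0)
    (C : V →ₗ[ℝ] V)
    (hC2 : ∀ v, C (C v) = v)
    (hCanti : ∀ u v, Ω (C u) (C v) = - Ω u v)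
    (Φ : V →ₗ[ℝ] V)
    (hΦbij : Function.Bijective Φ)
    (hΦsymp : ∀ u v, Ω (Φ u) (Φ v) = Ω u v)
    (hCΦ : ∀ v, C (Φ (C (Φ v))) = v) :
    (∀ u v : V, Ω (u - Φ u) (C v) = Ω (v - Φ v) (C u)) ∧
    (∃ Q : QuadraticForm ℝ V, ∀ v : V, Q v = Ω (v - Φ v) (C v)) := by
  -- antisymmetry of Ω
  have hskew : ∀ u v : V, Ω u v = - Ω v u := by
    intro u v
    have h := halt (u + v)
    simp only [map_add, LinearMap.add_apply, halt] at h
    linarith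
  -- Φ (C (Φ (C w))) = w
  have hΦC : ∀ w : V, Φ (C (Φ (C w))) = w := by
    intro w
    have h2 := congrArg C (hCΦ (C w))
    rw [hC2, hC2] at h2
    exact h2
  have key : ∀ u v : V, Ω (u - Φ u) (C v) = Ω (v - Φ v) (C u) := by
    intro u v
    have h1 : Ω u (C v) = Ω v (C u) := by
      have := hCanti (C u) v
      rw [hC2] at this
      rw [this]
      linarith [hskew (C u) v]
    have h2 : Ω (Φ u) (C v) = Ω (Φ v) (C u) := by
      have hw : (C v : V) = Φ (C (Φ v)) := by
        have h := hΦC (C v); rw [hC2] at h; exact h.symm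
      rw [hw, hΦsymp]
      have := hCanti (C u) (Φ v)
      rw [hC2] at this
      rw [this]
      linarith [hskew (C u) (Φ v)]
    simp only [map_sub, LinearMap.sub_apply]
    rw [h1, h2]
  refine ⟨key, ?_⟩
  let B : V →ₗ[ℝ] V →ₗ[ℝ] ℝ :=
    (Ω.comp (LinearMap.id - Φ)).compl₂ C
  refine ⟨LinearMap.BilinMap.toQuadraticMap B, fun v => ?_⟩
  simp [B, LinearMap.BilinMap.toQuadraticMap_apply, LinearMap.compl₂_apply,
    LinearMap.comp_apply, LinearMap.sub_apply]
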